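/- Let t ∈ [π + 1, 5], ψ = arcsin(1/t), and let p, q ∈ [0, ψ + π/2) satisfy (t + 1)/(t + g_ψ(p)) ≥ x(t) and (t + 1)/(t + g_ψ(q)) ≥ x(t), where g_ψ(s) = e^{s·tan ψ}·cos ψ / cos(ψ − s), x(t) = 1 − (u(t) − 1)/t, u(t) = f⁻¹(t − 1 − π/2), and f(s) = √(s² − 1) + arcsin(1/s). Set x_P = (t + 1)/(t + g_ψ(p)), x_Q = (t + 1)/(t + g_ψ(q)), and γ = π/2 − √(t² − 1)·ln √(x_Q/x_P). Then q < γ < π − p. -/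

import Mathlib

noncomputable section

open Real

/-- `f(s) = √(s² − 1) + arcsin(1/s)`. -/
def fDS (s : ℝ) : ℝ := Real.sqrt (s ^ 2 - 1) + Real.arcsin (1 / s)

/-- The inverse of `f` on `[1, ∞)`. -/
def fDSInv : ℝ → ℝ := Function.invFunOn fDS (Set.Ici 1)

/-- `u(t) = f⁻¹(t − 1 − π/2)`. -/
def uFun (t : ℝ) : ℝ := fDSInv (t - 1 - π / 2)

/-- `x(t) = 1 − (u(t) − 1)/t`. -/
def xFun (t : ℝ) : ℝ := 1 - (uFun t - 1) / t

/-- `g_ψ(s) = e^{s·tan ψ}·cos ψ / cos(ψ − s)`. -/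
def gFun (ψ s : ℝ) : ℝ := Real.exp (s * Real.tan ψ) * Real.cos ψ / Real.cos (ψ - s)

/-!
Write `c = √(t² − 1) = cot ψ` and `x = x(t)`. Since `log x ≤ log x_P, log x_Q`, both inequalities
follow from `s + (c/2)·log x_S < π/2 + (c/2)·log x` for `s ∈ {p, q}`. This is clear when
`s < π/2 + (c/2)·log x`, because `g_ψ ≥ 1`. Otherwise `e^{s/c} ≥ e^{π/(2c)}·√x` bounds
`cos(ψ − s) = e^{s/c}·cos ψ / g_ψ(s)` from below, while
`cos(ψ − s) = sin(ψ + π/2 − s) < ψ + π/2 − s`.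
With `log y ≤ y − 1` the claim becomes an inequality between rational functions of
`G = g_ψ(s) ∈ [1, B]`, where `B` is the value of `g_ψ` at which `x_S = x`. It is checked on four
subintervals of `t` from interval bounds on `c`, on `u(t)` (via `√(u² − 1) + 1/u ≤ f(u)`) and on
`x(t)`, by a negative discriminant.
-/

open Set

lemma self_le_arcsin {y : ℝ} (h0 : 0 ≤ y) (h1 : y ≤ 1) : y ≤ arcsin y := by
  simpa [sin_arcsin (by linarith) h1] using sin_le (arcsin_nonneg.2 h0)

lemma continuousOn_fDS : ContinuousOn fDS (Ici 1) := by
  unfold fDS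
  fun_prop (disch := intro s hs; exact (zero_lt_one.trans_le hs).ne')

lemma fDS_one : fDS 1 = π / 2 := by simp [fDS]

lemma le_fDS_add_one {y : ℝ} (hy : 0 ≤ y) : y ≤ fDS (y + 1) := by
  have hsqrt : y ≤ √((y + 1) ^ 2 - 1) := (Real.le_sqrt hy (by nlinarith)).2 (by nlinarith)
  have harcsin : 0 ≤ arcsin (1 / (y + 1)) := arcsin_nonneg.2 (by positivity)
  unfold fDS
  linarith

lemma exists_fDS_eq {y : ℝ} (hy : π / 2 ≤ y) : ∃ s ∈ Ici (1 : ℝ), fDS s = y := by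
  have hy0 : 0 ≤ y := by linarith [pi_pos]
  obtain ⟨s, hs, hfs⟩ := intermediate_value_Icc (by linarith : (1 : ℝ) ≤ y + 1)
    (continuousOn_fDS.mono Icc_subset_Ici_self) ⟨fDS_one ▸ hy, le_fDS_add_one hy0⟩
  exact ⟨s, hs.1, hfs⟩

lemma one_le_fDSInv {y : ℝ} (hy : π / 2 ≤ y) : 1 ≤ fDSInv y :=
  Function.invFunOn_mem (exists_fDS_eq hy)

lemma fDS_fDSInv {y : ℝ} (hy : π / 2 ≤ y) : fDS (fDSInv y) = y :=
  Function.invFunOn_eq (exists_fDS_eq hy)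

lemma self_le_fDS {s : ℝ} (hs : 1 ≤ s) : s ≤ fDS s := by
  have hs0 : 0 < s := by linarith
  have hsqrt : s - 1 / s ≤ √(s ^ 2 - 1) := by
    refine le_trans (le_abs_self _) (Real.abs_le_sqrt ?_)
    rw [show (s - 1 / s) ^ 2 = s ^ 2 - 2 + 1 / s ^ 2 by field_simp; ring]
    linarith [(div_le_one (by positivity : (0 : ℝ) < s ^ 2)).2 (one_le_pow₀ hs)]
  have := self_le_arcsin (y := 1 / s) (by positivity) ((div_le_one hs0).2 hs)
  unfold fDS
  linarith

lemma sqrt_sq_sub_one_add_inv_lt {a b : ℝ} (ha : 1 ≤ a) (hab : a < b) :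
    √(a ^ 2 - 1) + 1 / a < √(b ^ 2 - 1) + 1 / b := by
  have ha0 : 0 < a := by linarith
  have hb0 : 0 < b := by linarith
  have hsqrt : √(a ^ 2 - 1) + (b - a) ≤ √(b ^ 2 - 1) := by
    have hsq := Real.sq_sqrt (show 0 ≤ a ^ 2 - 1 by nlinarith)
    have hle : √(a ^ 2 - 1) ≤ a := (Real.sqrt_le_left ha0.le).2 (by linarith)
    rw [Real.le_sqrt (by positivity) (by nlinarith)]
    nlinarith [Real.sqrt_nonneg (a ^ 2 - 1)]
  have hinv : 1 / a - 1 / b < b - a := by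
    rw [div_sub_div _ _ ha0.ne' hb0.ne', div_lt_iff₀ (by positivity)]
    nlinarith [mul_pos (sub_pos.2 hab) (show 0 < a * b - 1 by nlinarith)]
  linarith

lemma le_of_fDS_le {u U : ℝ} (hu : 1 ≤ u) (hU : 1 ≤ U) (h : fDS u ≤ √(U ^ 2 - 1) + 1 / U) :
    u ≤ U := by
  by_contra! hlt
  have := self_le_arcsin (y := 1 / u) (by positivity) ((div_le_one (by linarith)).2 hu)
  have := sqrt_sq_sub_one_add_inv_lt hU hlt
  unfold fDS at h
  linarith

lemma xFun_pos {t : ℝ} (ht : π + 1 ≤ t) : 0 < xFun t := by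
  have hy : π / 2 ≤ t - 1 - π / 2 := by linarith
  have hu : uFun t ≤ t - 1 - π / 2 := (fDS_fDSInv hy) ▸ self_le_fDS (one_le_fDSInv hy)
  have ht0 : 0 < t := by linarith [pi_pos]
  rw [xFun, sub_pos, div_lt_one ht0]
  linarith [pi_pos]

-- `1.570796 < π / 2` by `pi_gt_d6`.
lemma uFun_le {t T U : ℝ} (ht : π + 1 ≤ t) (htT : t ≤ T) (hU : 1 ≤ U)
    (hTU : (T - 1 - 1.570796 - 1 / U) ^ 2 ≤ U ^ 2 - 1) : uFun t ≤ U := by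
  have hy : π / 2 ≤ t - 1 - π / 2 := by linarith
  refine le_of_fDS_le (one_le_fDSInv hy) hU ?_
  rw [uFun, fDS_fDSInv hy]
  linarith [le_abs_self (T - 1 - 1.570796 - 1 / U), Real.abs_le_sqrt hTU, pi_gt_d6]

lemma one_sub_div_le_xFun {t t₁ T U : ℝ} (ht : π + 1 ≤ t) (ht₁ : t₁ ≤ t) (ht₁0 : 0 < t₁)
    (htT : t ≤ T) (hU : 1 ≤ U) (hTU : (T - 1 - 1.570796 - 1 / U) ^ 2 ≤ U ^ 2 - 1) :
    1 - (U - 1) / t₁ ≤ xFun t := by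
  have hu : uFun t ≤ U := uFun_le ht htT hU hTU
  have hu1 : 1 ≤ uFun t := one_le_fDSInv (by linarith)
  have : (uFun t - 1) / t ≤ (U - 1) / t₁ := div_le_div₀ (by linarith) (by linarith) ht₁0 ht₁
  rw [xFun]
  linarith

section gFun

variable {ψ s : ℝ}

lemma cos_sub_pos (hψ : ψ < π / 2) (hs : s ∈ Ico 0 (ψ + π / 2)) : 0 < cos (ψ - s) :=
  cos_pos_of_mem_Ioo ⟨by linarith [hs.2], by linarith [hs.1]⟩

lemma gFun_mul_cos_sub (h : cos (ψ - s) ≠ 0) :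
    gFun ψ s * cos (ψ - s) = exp (s * tan ψ) * cos ψ :=
  div_mul_cancel₀ _ h

lemma one_le_gFun (hψ : ψ ∈ Ico 0 (π / 2)) (hs : s ∈ Ico 0 (ψ + π / 2)) : 1 ≤ gFun ψ s := by
  have hcos : 0 < cos ψ := cos_pos_of_mem_Ioo ⟨by linarith [hψ.1, pi_pos], hψ.2⟩
  have hsin : 0 ≤ sin ψ := sin_nonneg_of_nonneg_of_le_pi hψ.1 (by linarith [hψ.2, pi_pos])
  rw [gFun, one_le_div (cos_sub_pos hψ.2 hs)]
  calc cos (ψ - s) = cos ψ * cos s + sin ψ * sin s := cos_sub ψ s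
    _ ≤ cos ψ + sin ψ * s :=
        add_le_add (mul_le_of_le_one_right hcos.le (cos_le_one s))
          (mul_le_mul_of_nonneg_left (sin_le hs.1) hsin)
    _ = (s * tan ψ + 1) * cos ψ := by rw [tan_eq_sin_div_cos]; field_simp; ring
    _ ≤ exp (s * tan ψ) * cos ψ := by gcongr; exact add_one_le_exp _

end gFun

def ExpCosDominates (t k ψ x B : ℝ) : Prop :=
  ∀ G ∈ Icc 1 B,
    ψ * G + k * G * (B - G) / (t + G) ≤ exp ((π / 2 + k * log x) * tan ψ) * cos ψ

theorem add_mul_log_lt_of_expCosDominates {t k ψ x B s : ℝ} (ht : 0 < t) (hk : 0 ≤ k)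
    (hψ : ψ ∈ Ico 0 (π / 2)) (hs : s ∈ Ico 0 (ψ + π / 2)) (hx : 0 < x)
    (hB : x * (t + B) = t + 1) (hxs : x ≤ (t + 1) / (t + gFun ψ s))
    (hdom : ExpCosDominates t k ψ x B) :
    s + k * log ((t + 1) / (t + gFun ψ s)) < π / 2 + k * log x := by
  set G := gFun ψ s
  have hG1 : 1 ≤ G := one_le_gFun hψ hs
  have htG : 0 < t + G := by linarith
  have hGB : G ≤ B := by
    rw [le_div_iff₀ htG, ← hB] at hxs
    linarith [le_of_mul_le_mul_left hxs hx]
  have hlog : log ((t + 1) / (t + G)) - log x ≤ (B - G) / (t + G) := by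
    rw [← log_div (by positivity) hx.ne']
    calc log ((t + 1) / (t + G) / x) ≤ (t + 1) / (t + G) / x - 1 :=
          log_le_sub_one_of_pos (by positivity)
      _ = (B - G) / (t + G) := by rw [← hB]; field_simp; ring
  obtain hsr | hsr := lt_or_ge s (π / 2 + k * log x)
  · have : log ((t + 1) / (t + G)) ≤ 0 :=
      log_nonpos (by positivity) ((div_le_one htG).2 (by linarith))
    nlinarith
  have hcos_sub := cos_sub_pos hψ.2 hs
  have hcos_ge : ψ + k * (B - G) / (t + G) ≤ cos (ψ - s) := by
    have htan : 0 ≤ tan ψ := tan_nonneg_of_nonneg_of_le_pi_div_two hψ.1 hψ.2.le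
    have hcos : 0 ≤ cos ψ := cos_nonneg_of_mem_Icc ⟨by linarith [hψ.1, pi_pos], hψ.2.le⟩
    have hexp : exp ((π / 2 + k * log x) * tan ψ) * cos ψ ≤ G * cos (ψ - s) := by
      rw [gFun_mul_cos_sub hcos_sub.ne']
      gcongr
    rw [← mul_le_mul_iff_right₀ (by linarith : 0 < G)]
    calc G * (ψ + k * (B - G) / (t + G)) = ψ * G + k * G * (B - G) / (t + G) := by ring
      _ ≤ G * cos (ψ - s) := (hdom G ⟨hG1, hGB⟩).trans hexp
  have hcos_lt : cos (ψ - s) < ψ + π / 2 - s := by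
    rw [← cos_neg, neg_sub, ← sin_pi_div_two_sub, show π / 2 - (s - ψ) = ψ + π / 2 - s by ring]
    exact sin_lt (by linarith [hs.2])
  have : k * (log ((t + 1) / (t + G)) - log x) ≤ k * (B - G) / (t + G) := by
    rw [mul_div_assoc]
    exact mul_le_mul_of_nonneg_left hlog hk
  linarith

section arcsinInv

variable {t : ℝ}

lemma sqrt_one_sub_inv_sq (ht : 0 < t) : √(1 - (1 / t) ^ 2) = √(t ^ 2 - 1) / t := by
  rw [show 1 - (1 / t) ^ 2 = (t ^ 2 - 1) / t ^ 2 by field_simp, Real.sqrt_div' _ (sq_nonneg t),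
    Real.sqrt_sq ht.le]

lemma cos_arcsin_inv (ht : 0 < t) : cos (arcsin (1 / t)) = √(t ^ 2 - 1) / t := by
  rw [cos_arcsin, sqrt_one_sub_inv_sq ht]

lemma tan_arcsin_inv (ht : 0 < t) : tan (arcsin (1 / t)) = 1 / √(t ^ 2 - 1) := by
  rw [tan_arcsin, sqrt_one_sub_inv_sq ht, div_div_div_cancel_right₀ ht.ne']

lemma arcsin_inv_mem_Ico (ht : 1 < t) : arcsin (1 / t) ∈ Ico 0 (π / 2) :=
  ⟨arcsin_nonneg.2 (by positivity),
    arcsin_lt_pi_div_two.2 ((div_lt_one (by linarith)).2 ht)⟩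

lemma arcsin_inv_le (ht : 1 < t) : arcsin (1 / t) ≤ 1 / √(t ^ 2 - 1) :=
  tan_arcsin_inv (by linarith : 0 < t) ▸ le_tan (arcsin_inv_mem_Ico ht).1 (arcsin_inv_mem_Ico ht).2

lemma exp_mul_tan_arcsin_inv_mul_cos {x : ℝ} (ht : 1 < t) (hx : 0 < x) :
    exp ((π / 2 + √(t ^ 2 - 1) / 2 * log x) * tan (arcsin (1 / t))) * cos (arcsin (1 / t)) =
      exp (π / (2 * √(t ^ 2 - 1))) * √x * (√(t ^ 2 - 1) / t) := by
  have hc : 0 < √(t ^ 2 - 1) := Real.sqrt_pos.2 (by nlinarith)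
  rw [tan_arcsin_inv (by linarith), cos_arcsin_inv (by linarith),
    show (π / 2 + √(t ^ 2 - 1) / 2 * log x) * (1 / √(t ^ 2 - 1)) =
      π / (2 * √(t ^ 2 - 1)) + log x / 2 by field_simp,
    exp_add, exp_half, exp_log hx]

end arcsinInv

lemma div_add_mul_div_lt_of_discrim_neg {a b T A B G : ℝ} (ha : 0 < a) (hT : 0 < T)
    (hG : 0 < G) (hab : 2 < a * b)
    (hdisc : discrim (2 - a * b) (2 * T + a * b * B - 2 * a * A) (-(2 * a * A * T)) < 0) :
    G / a + b / 2 * G * (B - G) / (T + G) < A := by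
  rw [discrim] at hdisc
  rw [div_add_div _ _ ha.ne' (by positivity), div_lt_iff₀ (by positivity)]
  nlinarith [sq_nonneg (2 * (a * b - 2) * G - (2 * T + a * b * B - 2 * a * A))]

/- On `[t₁, t₂]`: `c₁ ≤ √(t² − 1) ≤ c₂`, `u(t) ≤ U`, `w ≤ √(x(t))`, `B ≤ B₂`, and `A` is a lower
bound for the right-hand side of `ExpCosDominates`. -/
theorem expCosDominates_of_mem_Icc (t₁ t₂ c₁ c₂ U w A B₂ : ℝ) {t B : ℝ} (ht : t ∈ Icc t₁ t₂)
    (hπt : π + 1 ≤ t) (hB : xFun t * (t + B) = t + 1) (ht₁ : 0 < t₁)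
    (hc₁ : 0 < c₁ ∧ c₁ ^ 2 ≤ t₁ ^ 2 - 1) (hc₂ : 0 < c₂ ∧ t₂ ^ 2 - 1 ≤ c₂ ^ 2)
    (hU : 1 ≤ U ∧ (t₂ - 1 - 1.570796 - 1 / U) ^ 2 ≤ U ^ 2 - 1)
    (hw : 0 < w ∧ w ^ 2 ≤ 1 - (U - 1) / t₁)
    (hB₂ : (t₂ + 1) / (1 - (U - 1) / t₁) - t₂ ≤ B₂)
    (hA : A ≤ (1 + 1.570796 / c₂ + (1.570796 / c₂) ^ 2 / 2) * w * (c₁ / t₂))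
    (hdisc : 2 < c₁ * c₂ ∧
      discrim (2 - c₁ * c₂) (2 * t₁ + c₁ * c₂ * B₂ - 2 * c₁ * A) (-(2 * c₁ * A * t₁)) < 0) :
    ExpCosDominates t (√(t ^ 2 - 1) / 2) (arcsin (1 / t)) (xFun t) B := by
  obtain ⟨hc₁0, hc₁⟩ := hc₁
  obtain ⟨hc₂0, hc₂⟩ := hc₂
  obtain ⟨hU1, hU⟩ := hU
  obtain ⟨hw0, hw⟩ := hw
  set c := √(t ^ 2 - 1)
  set x := xFun t
  set xlo := 1 - (U - 1) / t₁
  have ht1 : 1 < t := by linarith [pi_gt_three]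
  have ht0 : 0 < t := by linarith
  have ht₂ : 0 < t₂ := by linarith [ht.2]
  have hc : 0 < c := Real.sqrt_pos.2 (by nlinarith)
  have hc₁c : c₁ ≤ c := (Real.le_sqrt hc₁0.le (by nlinarith)).2 (by nlinarith [ht.1])
  have hcc₂ : c ≤ c₂ := (Real.sqrt_le_left hc₂0.le).2 (by nlinarith [ht.2])
  have hxlo0 : 0 < xlo := by nlinarith
  have hxlo1 : xlo ≤ 1 := by
    have : 0 ≤ (U - 1) / t₁ := div_nonneg (by linarith) ht₁.le
    linarith
  have hxlo : xlo ≤ x := one_sub_div_le_xFun hπt ht.1 ht₁ ht.2 hU1 hU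
  have hx : 0 < x := hxlo0.trans_le hxlo
  have hBB₂ : B ≤ B₂ := by
    have hB' : B = (t + 1) / x - t := by rw [eq_sub_iff_add_eq, eq_div_iff hx.ne']; linarith
    have h1 : (t + 1) / x ≤ (t + 1) / xlo := div_le_div_of_nonneg_left (by linarith) hxlo0 hxlo
    have h2 : 1 ≤ 1 / xlo := by rw [le_div_iff₀ hxlo0]; linarith
    have h3 : (t + 1) / xlo - t ≤ (t₂ + 1) / xlo - t₂ := by
      rw [div_eq_mul_one_div (t + 1), div_eq_mul_one_div (t₂ + 1)]
      nlinarith [ht.2]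
    linarith
  have hψ : arcsin (1 / t) ≤ 1 / c₁ :=
    (arcsin_inv_le ht1).trans (one_div_le_one_div_of_le hc₁0 hc₁c)
  have hA' : A ≤ exp ((π / 2 + c / 2 * log x) * tan (arcsin (1 / t))) * cos (arcsin (1 / t)) := by
    have hy : 1.570796 / c₂ ≤ π / (2 * c) := by
      rw [div_le_div_iff₀ hc₂0 (by positivity)]
      nlinarith [pi_gt_d6]
    have hexp : 1 + 1.570796 / c₂ + (1.570796 / c₂) ^ 2 / 2 ≤ exp (π / (2 * c)) :=
      (quadratic_le_exp_of_nonneg (by positivity)).trans (exp_le_exp.2 hy)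
    have hsqrt : w ≤ √x := (Real.le_sqrt' hw0).2 (hw.trans hxlo)
    have hcos : c₁ / t₂ ≤ c / t := div_le_div₀ hc.le hc₁c ht0 ht.2
    rw [exp_mul_tan_arcsin_inv_mul_cos ht1 hx]
    refine hA.trans ?_
    gcongr
  intro G hG
  have hG0 : 0 < G := by linarith [hG.1]
  calc arcsin (1 / t) * G + c / 2 * G * (B - G) / (t + G)
      ≤ G / c₁ + c₂ / 2 * G * (B₂ - G) / (t₁ + G) := by
        rw [div_eq_mul_one_div G, mul_comm G]
        have : 0 ≤ B - G := by linarith [hG.2]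
        gcongr
        · exact mul_nonneg (by positivity) (by linarith)
        · exact ht.1
    _ ≤ A := (div_add_mul_div_lt_of_discrim_neg hc₁0 ht₁ hG0 hdisc.1 hdisc.2).le
    _ ≤ _ := hA'

theorem expCosDominates_of_mem_Icc_pi_add_one_five {t B : ℝ} (ht : t ∈ Icc (π + 1) 5)
    (hB : xFun t * (t + B) = t + 1) :
    ExpCosDominates t (√(t ^ 2 - 1) / 2) (arcsin (1 / t)) (xFun t) B := by
  obtain ⟨hπt, ht5⟩ := ht
  obtain h₁ | h₁ := le_or_gt t 4.7
  · apply expCosDominates_of_mem_Icc 4.1 4.7 3.976 4.593 1.886 0.885 1.048 2.572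
      ⟨by linarith [pi_gt_d2], h₁⟩ hπt hB <;> norm_num [discrim]
  obtain h₂ | h₂ := le_or_gt t 4.89
  · apply expCosDominates_of_mem_Icc 4.7 4.89 4.592 4.787 2.097 0.875 1.135 2.794
      ⟨h₁.le, h₂⟩ hπt hB <;> norm_num [discrim]
  obtain h₃ | h₃ := le_or_gt t 4.97
  · apply expCosDominates_of_mem_Icc 4.89 4.97 4.786 4.869 2.184 0.87 1.151 2.908
      ⟨h₂.le, h₃⟩ hπt hB <;> norm_num [discrim]
  · apply expCosDominates_of_mem_Icc 4.97 5 4.868 4.899 2.217 0.868 1.159 2.946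
      ⟨h₃.le, ht5⟩ hπt hB <;> norm_num [discrim]

lemma lt_sub_mul_log_sqrt_div_lt {c x xP xQ p q : ℝ} (hc : 0 ≤ c) (hx : 0 < x)
    (hxP : x ≤ xP) (hxQ : x ≤ xQ)
    (hP : p + c / 2 * log xP < π / 2 + c / 2 * log x)
    (hQ : q + c / 2 * log xQ < π / 2 + c / 2 * log x) :
    q < π / 2 - c * log √(xQ / xP) ∧ π / 2 - c * log √(xQ / xP) < π - p := by
  rw [log_sqrt (div_nonneg (hx.trans_le hxQ).le (hx.trans_le hxP).le),
    log_div (hx.trans_le hxQ).ne' (hx.trans_le hxP).ne']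
  have hlogP := mul_le_mul_of_nonneg_left (log_le_log hx hxP) (by positivity : 0 ≤ c / 2)
  have hlogQ := mul_le_mul_of_nonneg_left (log_le_log hx hxQ) (by positivity : 0 ≤ c / 2)
  constructor <;> nlinarith

/-- Let `t ∈ [π + 1, 5]`, `ψ = arcsin(1/t)`, and let
`p, q ∈ [0, ψ + π/2)` satisfy `(t + 1)/(t + g_ψ(p)) ≥ x(t)` and
`(t + 1)/(t + g_ψ(q)) ≥ x(t)`.  Set `x_P = (t + 1)/(t + g_ψ(p))`,
`x_Q = (t + 1)/(t + g_ψ(q))` and `γ = π/2 − √(t² − 1)·ln √(x_Q/x_P)`.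
Then `q < γ < π − p`. -/
theorem q_lt_gamma_lt_pi_sub_p (t : ℝ) (ht : t ∈ Set.Icc (π + 1) 5)
    (ψ : ℝ) (hψ : ψ = Real.arcsin (1 / t))
    (p q : ℝ) (hp : p ∈ Set.Ico 0 (ψ + π / 2)) (hq : q ∈ Set.Ico 0 (ψ + π / 2))
    (hxp : xFun t ≤ (t + 1) / (t + gFun ψ p))
    (hxq : xFun t ≤ (t + 1) / (t + gFun ψ q)) :
    q < π / 2 - Real.sqrt (t ^ 2 - 1) *
        Real.log (Real.sqrt (((t + 1) / (t + gFun ψ q)) / ((t + 1) / (t + gFun ψ p)))) ∧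
    π / 2 - Real.sqrt (t ^ 2 - 1) *
        Real.log (Real.sqrt (((t + 1) / (t + gFun ψ q)) / ((t + 1) / (t + gFun ψ p)))) <
      π - p := by
  subst hψ
  have ht1 : 1 < t := by linarith [ht.1, pi_gt_three]
  have hx := xFun_pos ht.1
  have hB : xFun t * (t + ((t + 1) / xFun t - t)) = t + 1 := by field_simp; ring
  have hdom := expCosDominates_of_mem_Icc_pi_add_one_five ht hB
  have hk : 0 ≤ √(t ^ 2 - 1) / 2 := by positivity
  exact lt_sub_mul_log_sqrt_div_lt (by positivity) hx hxp hxq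
    (add_mul_log_lt_of_expCosDominates (by linarith) hk (arcsin_inv_mem_Ico ht1) hp hx hB hxp hdom)
    (add_mul_log_lt_of_expCosDominates (by linarith) hk (arcsin_inv_mem_Ico ht1) hq hx hB hxq hdom)
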